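/- arXiv:1705.02266 — 6 statements merged into one kernel-verified Lean document; each statement's English description precedes it below -/
import Mathlib

section
/- In the clause-variable game where clause player c has three pure strategies i, k, l and receives payoff p_i - p_k - p_l from strategy i, -p_i + p_k - p_l from strategy k, and -p_i - p_k + p_l from strategy l (where p_i, p_k, p_l ∈ [0,1] are the probabilities that the three variable players play True), the maximum payoff c can obtain is 1, and this maximum is achieved only if exactly one of p_i, p_k, p_l equals 1 and the other two equal 0. -/
/-! The payoff of each pure strategy has the form `a - b - c` with `a, b, c ∈ [0, 1]`, which is at
most `1` with equality only at `a = 1, b = c = 0`. A mixed payoff is a convex combination of pure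
payoffs, so it is at most `1`, and it equals `1` only if some pure strategy played with positive
weight already pays `1`. -/

open Finset

section WeightedSum

variable {ι R : Type*} [CommRing R] [LinearOrder R] [IsStrictOrderedRing R]
  {s : Finset ι} {w x : ι → R} {M : R}

theorem sum_mul_le_of_le (hw : ∀ i ∈ s, 0 ≤ w i) (hw1 : ∑ i ∈ s, w i = 1)
    (hx : ∀ i ∈ s, x i ≤ M) : ∑ i ∈ s, w i * x i ≤ M :=
  calc ∑ i ∈ s, w i * x i ≤ ∑ i ∈ s, w i * M :=
        sum_le_sum fun i hi => mul_le_mul_of_nonneg_left (hx i hi) (hw i hi)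
    _ = M := by rw [← sum_mul, hw1, one_mul]

theorem exists_eq_of_sum_mul_eq (hw : ∀ i ∈ s, 0 ≤ w i) (hw1 : ∑ i ∈ s, w i = 1)
    (hx : ∀ i ∈ s, x i ≤ M) (h : ∑ i ∈ s, w i * x i = M) : ∃ i ∈ s, x i = M := by
  have hterms : ∀ i ∈ s, w i * x i = w i * M := by
    refine (sum_eq_sum_iff_of_le fun i hi => mul_le_mul_of_nonneg_left (hx i hi) (hw i hi)).1 ?_
    rw [h, ← sum_mul, hw1, one_mul]
  obtain ⟨i, hi, hwi⟩ := exists_ne_zero_of_sum_ne_zero (hw1.symm ▸ one_ne_zero : ∑ i ∈ s, w i ≠ 0)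
  exact ⟨i, hi, mul_left_cancel₀ hwi (hterms i hi)⟩

end WeightedSum

section UnitInterval

variable {a b c : ℝ}

theorem sub_sub_le_one (ha : a ∈ Set.Icc (0 : ℝ) 1) (hb : b ∈ Set.Icc (0 : ℝ) 1)
    (hc : c ∈ Set.Icc (0 : ℝ) 1) : a - b - c ≤ 1 := by
  linarith [ha.2, hb.1, hc.1]

theorem eq_one_of_sub_sub_eq_one (ha : a ∈ Set.Icc (0 : ℝ) 1) (hb : b ∈ Set.Icc (0 : ℝ) 1)
    (hc : c ∈ Set.Icc (0 : ℝ) 1) (h : a - b - c = 1) : a = 1 ∧ b = 0 ∧ c = 0 :=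
  ⟨by linarith [ha.2, hb.1, hc.1], by linarith [hb.1, hc.1, ha.2], by linarith [hb.1, hc.1, ha.2]⟩

end UnitInterval

/-- The clause player's payoff from any mixed strategy (qi, qk, ql) is at most 1,
and equals 1 only if exactly one of the variable probabilities is 1 and the other two are 0. -/
theorem stmt_0 (pi pk pl : ℝ) (hpi : pi ∈ Set.Icc (0:ℝ) 1) (hpk : pk ∈ Set.Icc (0:ℝ) 1)
    (hpl : pl ∈ Set.Icc (0:ℝ) 1) (qi qk ql : ℝ) (hqi : 0 ≤ qi) (hqk : 0 ≤ qk) (hql : 0 ≤ ql)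
    (hq : qi + qk + ql = 1) :
    qi * (pi - pk - pl) + qk * (-pi + pk - pl) + ql * (-pi - pk + pl) ≤ 1 ∧
    (qi * (pi - pk - pl) + qk * (-pi + pk - pl) + ql * (-pi - pk + pl) = 1 →
      (pi = 1 ∧ pk = 0 ∧ pl = 0) ∨ (pk = 1 ∧ pi = 0 ∧ pl = 0) ∨
        (pl = 1 ∧ pi = 0 ∧ pk = 0)) := by
  set w : Fin 3 → ℝ := ![qi, qk, ql]
  set x : Fin 3 → ℝ := ![pi - pk - pl, pk - pi - pl, pl - pi - pk]
  have hpayoff : qi * (pi - pk - pl) + qk * (-pi + pk - pl) + ql * (-pi - pk + pl)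
      = ∑ j, w j * x j := by
    simp only [Fin.sum_univ_three, w, x]; simp only [Matrix.cons_val]; ring
  have hw : ∀ j ∈ univ, 0 ≤ w j := by
    simp [Fin.forall_fin_succ, w, hqi, hqk, hql]
  have hw1 : ∑ j, w j = 1 := by simp [Fin.sum_univ_three, w, hq]
  have hx : ∀ j ∈ univ, x j ≤ 1 := by
    intro j _
    fin_cases j
    exacts [sub_sub_le_one hpi hpk hpl, sub_sub_le_one hpk hpi hpl, sub_sub_le_one hpl hpi hpk]
  rw [hpayoff]
  refine ⟨sum_mul_le_of_le hw hw1 hx, fun h => ?_⟩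
  obtain ⟨j, -, hj⟩ := exists_eq_of_sum_mul_eq hw hw1 hx h
  fin_cases j
  · exact .inl (eq_one_of_sub_sub_eq_one hpi hpk hpl hj)
  · exact .inr (.inl (eq_one_of_sub_sub_eq_one hpk hpi hpl hj))
  · exact .inr (.inr (eq_one_of_sub_sub_eq_one hpl hpi hpk hj))
end

section
/- In a polymatrix game built from a monotone cubic 1-in-3 SAT formula φ, if φ admits a 1-in-3 satisfying assignment, then the pure strategy profile in which each variable player plays the truth value of its variable and each clause player plays the strategy corresponding to the unique true variable of its clause is an exact Nash equilibrium with social welfare equal to the number of clauses m. -/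
/-!
With exactly one true variable per clause, a clause player's payoff for column `j` is
`2 p_j - 1`, so playing the true column earns the maximum `1`. Variable players earn `0`:
a true variable has nothing to gain, and a false one is never chosen by any clause, so its
payoff for False is also `0`. Summing gives welfare `m · 1 + 0`.
-/

namespace Stmt2

/-- A monotone cubic formula with exactly three distinct variables per clause. -/
structure CubicFormula (V C : Type) where
  var : C → Fin 3 → V
  inj : ∀ c, Function.Injective (var c)

variable {V C : Type} [Fintype V] [Fintype C] [DecidableEq V]

/-- α is a 1-in-3 satisfying assignment: exactly one variable per clause is true. -/
def OneInThree (F : CubicFormula V C) (α : V → Bool) : Prop :=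
  ∀ c : C, (Finset.univ.filter (fun j : Fin 3 => α (F.var c j) = true)).card = 1

/-- Payoff of clause player `c` for pure strategy `j`, where `p v` is the probability
that variable player `v` plays True: `p_j - Σ_{j'≠j} p_{j'}`. -/
def clausePure (F : CubicFormula V C) (p : V → ℝ) (c : C) (j : Fin 3) : ℝ :=
  p (F.var c j) - ∑ j' ∈ Finset.univ.erase j, p (F.var c j')

/-- Expected payoff of clause player `c`, where `q c` is its mixed strategy. -/
def clauseExp (F : CubicFormula V C) (p : V → ℝ) (q : C → Fin 3 → ℝ) (c : C) : ℝ :=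
  ∑ j, q c j * clausePure F p c j

/-- Payoff of variable player `v` for pure strategy `b` (True/False): 0 for True, and
`-Σ` (probability an incident clause plays `v`'s column) for False. -/
def varPure (F : CubicFormula V C) (q : C → Fin 3 → ℝ) (v : V) (b : Bool) : ℝ :=
  if b then 0 else -∑ c, ∑ j, (if F.var c j = v then q c j else 0)

/-- Expected payoff of variable player `v`, who plays True with probability `p v`. -/
def varExp (F : CubicFormula V C) (p : V → ℝ) (q : C → Fin 3 → ℝ) (v : V) : ℝ :=
  p v * varPure F q v true + (1 - p v) * varPure F q v false

/-- Social welfare: sum of all players' expected payoffs. -/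
def welfare (F : CubicFormula V C) (p : V → ℝ) (q : C → Fin 3 → ℝ) : ℝ :=
  ∑ c, clauseExp F p q c + ∑ v, varExp F p q v

/-- A valid mixed strategy profile. -/
def IsProfile (p : V → ℝ) (q : C → Fin 3 → ℝ) : Prop :=
  (∀ v, p v ∈ Set.Icc (0:ℝ) 1) ∧ (∀ c j, 0 ≤ q c j) ∧ (∀ c, ∑ j, q c j = 1)

/-- An exact Nash equilibrium: no player can improve by a unilateral (pure) deviation. -/
def IsNE (F : CubicFormula V C) (p : V → ℝ) (q : C → Fin 3 → ℝ) : Prop :=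
  IsProfile p q ∧ (∀ c j, clauseExp F p q c ≥ clausePure F p c j) ∧
    (∀ v b, varExp F p q v ≥ varPure F q v b)

section PureProfile

variable (F : CubicFormula V C) {p : V → ℝ}

omit [Fintype V] [Fintype C] [DecidableEq V] in
lemma sum_ite_eq_one_of_oneInThree {α : V → Bool} (hα : OneInThree F α) (c : C) :
    ∑ j, (if α (F.var c j) then (1 : ℝ) else 0) = 1 := by
  rw [Finset.sum_boole, hα c, Nat.cast_one]

omit [Fintype V] [Fintype C] [DecidableEq V] in
lemma clausePure_eq_of_sum_eq_one {c : C} (hc : ∑ j, p (F.var c j) = 1) (j : Fin 3) :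
    clausePure F p c j = 2 * p (F.var c j) - 1 := by
  rw [clausePure, Finset.sum_erase_eq_sub (Finset.mem_univ j), hc]
  ring

omit [Fintype V] in
lemma varPure_true (q : C → Fin 3 → ℝ) (v : V) : varPure F q v true = 0 := if_pos rfl

omit [Fintype V] in
lemma varPure_false_nonpos {q : C → Fin 3 → ℝ} (hq : ∀ c j, 0 ≤ q c j) (v : V) :
    varPure F q v false ≤ 0 := by
  rw [varPure, if_neg Bool.false_ne_true, neg_nonpos]
  exact Finset.sum_nonneg fun c _ => Finset.sum_nonneg fun j _ => by
    split_ifs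
    exacts [hq c j, le_rfl]

omit [Fintype V] [Fintype C] [DecidableEq V] in
lemma clauseExp_eq_one (hp : ∀ v, p v = 0 ∨ p v = 1) {c : C} (hc : ∑ j, p (F.var c j) = 1) :
    clauseExp F p (fun c j => p (F.var c j)) c = 1 := by
  have hsq : ∀ j, p (F.var c j) * (2 * p (F.var c j) - 1) = p (F.var c j) := fun j => by
    rcases hp (F.var c j) with h | h <;> rw [h] <;> norm_num
  simp only [clauseExp, clausePure_eq_of_sum_eq_one F hc, hsq, hc]

omit [Fintype V] in
lemma varExp_eq_zero (hp : ∀ v, p v = 0 ∨ p v = 1) (v : V) :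
    varExp F p (fun c j => p (F.var c j)) v = 0 := by
  rcases hp v with h | h
  · have hunplayed : ∑ c, ∑ j, (if F.var c j = v then p (F.var c j) else 0) = 0 :=
      Finset.sum_eq_zero fun c _ => Finset.sum_eq_zero fun j _ => by
        split_ifs with hv
        exacts [hv ▸ h, rfl]
    simp [varExp, varPure, h, hunplayed]
  · simp [varExp, varPure_true, h]

omit [Fintype V] in
-- Under `q c j = p (F.var c j)` each clause player plays the column of its unique true variable.
lemma isNE_of_pure (hp : ∀ v, p v = 0 ∨ p v = 1) (hc : ∀ c, ∑ j, p (F.var c j) = 1) :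
    IsNE F p (fun c j => p (F.var c j)) := by
  have hp01 : ∀ v, p v ∈ Set.Icc (0 : ℝ) 1 := fun v => by
    rcases hp v with h | h <;> simp [h]
  refine ⟨⟨hp01, fun c j => (hp01 _).1, hc⟩, fun c j => ?_, fun v b => ?_⟩
  · rw [clauseExp_eq_one F hp (hc c), clausePure_eq_of_sum_eq_one F (hc c)]
    linarith [(hp01 (F.var c j)).2]
  · rw [varExp_eq_zero F hp]
    cases b
    · exact varPure_false_nonpos F (fun c j => (hp01 _).1) v
    · rw [varPure_true]

lemma welfare_of_pure (hp : ∀ v, p v = 0 ∨ p v = 1) (hc : ∀ c, ∑ j, p (F.var c j) = 1) :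
    welfare F p (fun c j => p (F.var c j)) = Fintype.card C := by
  simp [welfare, clauseExp_eq_one F hp (hc _), varExp_eq_zero F hp]

end PureProfile

/-- If φ admits a 1-in-3 satisfying assignment α, then the corresponding pure profile
is an exact Nash equilibrium with social welfare equal to the number of clauses. -/
theorem stmt_2 (F : CubicFormula V C) (α : V → Bool) (hα : OneInThree F α)
    (p : V → ℝ) (q : C → Fin 3 → ℝ)
    (hp : ∀ v, p v = if α v then 1 else 0)
    (hq : ∀ c j, q c j = if α (F.var c j) then 1 else 0) :
    IsNE F p q ∧ welfare F p q = Fintype.card C := by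
  obtain rfl : q = fun c j => p (F.var c j) := funext₂ fun c j => by rw [hq, hp]
  have hp01 : ∀ v, p v = 0 ∨ p v = 1 := fun v => by
    rw [hp]; split_ifs <;> simp
  have hc : ∀ c, ∑ j, p (F.var c j) = 1 := fun c => by
    simpa only [hp] using sum_ite_eq_one_of_oneInThree F hα c
  exact ⟨isNE_of_pure F hp01 hc, welfare_of_pure F hp01 hc⟩

end Stmt2
end

section
/- In the polymatrix game G built from a monotone cubic 1-in-3 SAT formula, every variable player receives total payoff at most 0 under any strategy profile, and every clause player receives total payoff at most 1; moreover, a clause player attains payoff 1 only if it and its three neighboring variable players all play pure strategies. -/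
/-!
A clause player's pure payoff `p_j - Σ_{j' ≠ j} p_{j'}` is at most 1, with equality only when
its `j`-th variable is surely true and the other two surely false. Its expected payoff is an
average of these, so it equals 1 only if every strategy in the support pays 1, and two distinct
strategies cannot both do so. A variable player never gains anything, so its payoff is `≤ 0`.
-/

namespace Stmt3

/-- A monotone cubic formula with exactly three distinct variables per clause. -/
structure CubicFormula (V C : Type) where
  var : C → Fin 3 → V
  inj : ∀ c, Function.Injective (var c)

variable {V C : Type} [Fintype V] [Fintype C] [DecidableEq V]

/-- α is a 1-in-3 satisfying assignment: exactly one variable per clause is true. -/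
def OneInThree (F : CubicFormula V C) (α : V → Bool) : Prop :=
  ∀ c : C, (Finset.univ.filter (fun j : Fin 3 => α (F.var c j) = true)).card = 1

/-- Payoff of clause player `c` for pure strategy `j`, where `p v` is the probability
that variable player `v` plays True: `p_j - Σ_{j'≠j} p_{j'}`. -/
def clausePure (F : CubicFormula V C) (p : V → ℝ) (c : C) (j : Fin 3) : ℝ :=
  p (F.var c j) - ∑ j' ∈ Finset.univ.erase j, p (F.var c j')

/-- Expected payoff of clause player `c`, where `q c` is its mixed strategy. -/
def clauseExp (F : CubicFormula V C) (p : V → ℝ) (q : C → Fin 3 → ℝ) (c : C) : ℝ :=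
  ∑ j, q c j * clausePure F p c j

/-- Payoff of variable player `v` for pure strategy `b` (True/False): 0 for True, and
`-Σ` (probability an incident clause plays `v`'s column) for False. -/
def varPure (F : CubicFormula V C) (q : C → Fin 3 → ℝ) (v : V) (b : Bool) : ℝ :=
  if b then 0 else -∑ c, ∑ j, (if F.var c j = v then q c j else 0)

/-- Expected payoff of variable player `v`, who plays True with probability `p v`. -/
def varExp (F : CubicFormula V C) (p : V → ℝ) (q : C → Fin 3 → ℝ) (v : V) : ℝ :=
  p v * varPure F q v true + (1 - p v) * varPure F q v false

/-- Social welfare: sum of all players' expected payoffs. -/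
def welfare (F : CubicFormula V C) (p : V → ℝ) (q : C → Fin 3 → ℝ) : ℝ :=
  ∑ c, clauseExp F p q c + ∑ v, varExp F p q v

/-- A valid mixed strategy profile. -/
def IsProfile (p : V → ℝ) (q : C → Fin 3 → ℝ) : Prop :=
  (∀ v, p v ∈ Set.Icc (0:ℝ) 1) ∧ (∀ c j, 0 ≤ q c j) ∧ (∀ c, ∑ j, q c j = 1)

/-- An exact Nash equilibrium: no player can improve by a unilateral (pure) deviation. -/
def IsNE (F : CubicFormula V C) (p : V → ℝ) (q : C → Fin 3 → ℝ) : Prop :=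
  IsProfile p q ∧ (∀ c j, clauseExp F p q c ≥ clausePure F p c j) ∧
    (∀ v b, varExp F p q v ≥ varPure F q v b)

end Stmt3

section WeightedAverage

variable {ι : Type*} [Fintype ι] {w x : ι → ℝ} {b : ℝ}

theorem sum_mul_le_of_sum_eq_one (hw : ∀ i, 0 ≤ w i) (hw1 : ∑ i, w i = 1) (hx : ∀ i, x i ≤ b) :
    ∑ i, w i * x i ≤ b :=
  calc ∑ i, w i * x i ≤ ∑ i, w i * b :=
        Finset.sum_le_sum fun i _ => mul_le_mul_of_nonneg_left (hx i) (hw i)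
    _ = b := by rw [← Finset.sum_mul, hw1, one_mul]

theorem eq_of_sum_mul_eq_of_sum_eq_one (hw : ∀ i, 0 ≤ w i) (hw1 : ∑ i, w i = 1)
    (hx : ∀ i, x i ≤ b) (h : ∑ i, w i * x i = b) {i : ι} (hwi : 0 < w i) : x i = b := by
  have hgap : ∑ i, w i * (b - x i) = 0 := by
    simp only [mul_sub, Finset.sum_sub_distrib, ← Finset.sum_mul, hw1, h]
    ring
  have hgap_i := (Finset.sum_eq_zero_iff_of_nonneg fun i _ =>
    mul_nonneg (hw i) (sub_nonneg.2 (hx i))).1 hgap i (Finset.mem_univ i)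
  linarith [(mul_eq_zero.1 hgap_i).resolve_left hwi.ne']

end WeightedAverage

namespace Stmt3

section Payoffs

variable {V C : Type} {F : CubicFormula V C} {p : V → ℝ} {q : C → Fin 3 → ℝ}

theorem varExp_nonpos [Fintype C] [DecidableEq V] {v : V} (hp : p v ≤ 1)
    (hq : ∀ c j, 0 ≤ q c j) : varExp F p q v ≤ 0 := by
  have hload : 0 ≤ ∑ c, ∑ j, (if F.var c j = v then q c j else 0) :=
    Finset.sum_nonneg fun c _ => Finset.sum_nonneg fun j _ => by
      split_ifs
      exacts [hq c j, le_rfl]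
  simp only [varExp, varPure, if_true, Bool.false_eq_true, if_false, mul_zero, zero_add]
  exact mul_nonpos_of_nonneg_of_nonpos (sub_nonneg.2 hp) (neg_nonpos.2 hload)

theorem clausePure_le_one (hp : ∀ v, p v ∈ Set.Icc (0 : ℝ) 1) (c : C) (j : Fin 3) :
    clausePure F p c j ≤ 1 := by
  have hrest : 0 ≤ ∑ j' ∈ Finset.univ.erase j, p (F.var c j') :=
    Finset.sum_nonneg fun j' _ => (hp _).1
  rw [clausePure]
  linarith [(hp (F.var c j)).2]

theorem clausePure_eq_one (hp : ∀ v, p v ∈ Set.Icc (0 : ℝ) 1) {c : C} {j : Fin 3}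
    (h : clausePure F p c j = 1) :
    p (F.var c j) = 1 ∧ ∀ j' ≠ j, p (F.var c j') = 0 := by
  have hnonneg : ∀ j' ∈ Finset.univ.erase j, 0 ≤ p (F.var c j') := fun j' _ => (hp _).1
  rw [clausePure] at h
  have hrest : ∑ j' ∈ Finset.univ.erase j, p (F.var c j') = 0 := by
    linarith [Finset.sum_nonneg hnonneg, (hp (F.var c j)).2]
  refine ⟨by linarith, fun j' hj' => ?_⟩
  exact (Finset.sum_eq_zero_iff_of_nonneg hnonneg).1 hrest j' (by simp [hj'])

end Payoffs

variable {V C : Type} [Fintype V] [Fintype C] [DecidableEq V]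

/-- Every variable player gets total payoff at most 0, every clause player at most 1,
and a clause player attains payoff 1 only if it and its three neighbouring variable
players all play pure strategies. -/
theorem stmt_3 (F : CubicFormula V C) (p : V → ℝ) (q : C → Fin 3 → ℝ)
    (hprof : IsProfile p q) :
    (∀ v, varExp F p q v ≤ 0) ∧ (∀ c, clauseExp F p q c ≤ 1) ∧
    (∀ c, clauseExp F p q c = 1 →
      (∃ j, q c j = 1) ∧ ∀ j, p (F.var c j) = 0 ∨ p (F.var c j) = 1) := by
  obtain ⟨hp, hq, hq1⟩ := hprof
  refine ⟨fun v => varExp_nonpos (hp v).2 hq,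
    fun c => sum_mul_le_of_sum_eq_one (hq c) (hq1 c) (clausePure_le_one hp c), fun c hc => ?_⟩
  have hbest : ∀ j, 0 < q c j → clausePure F p c j = 1 :=
    fun j => eq_of_sum_mul_eq_of_sum_eq_one (hq c) (hq1 c) (clausePure_le_one hp c) hc
  obtain ⟨j₀, -, hj₀⟩ : ∃ j ∈ Finset.univ, (0 : ℝ) < q c j :=
    Finset.exists_lt_of_sum_lt (by simp [hq1 c])
  obtain ⟨htrue, hfalse⟩ := clausePure_eq_one hp (hbest j₀ hj₀)
  -- Payoff 1 at `j ≠ j₀` would make `F.var c j` surely true, but it is surely false.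
  have hsupport : ∀ j ≠ j₀, q c j = 0 := fun j hj =>
    (hq c j).antisymm' <| not_lt.1 fun hpos => by
      linarith [hfalse j hj, (clausePure_eq_one hp (hbest j hpos)).1]
  refine ⟨⟨j₀, ?_⟩, fun j => ?_⟩
  · rw [← hq1 c, Finset.sum_eq_single j₀ (fun j _ hj => hsupport j hj) (by simp)]
  · rcases eq_or_ne j j₀ with rfl | hj
    exacts [Or.inr htrue, Or.inl (hfalse j hj)]

end Stmt3
end

section
/- If the polymatrix game G built from a monotone cubic 1-in-3 SAT formula φ admits a strategy profile with social welfare equal to the number of clauses m, then φ has a 1-in-3 satisfying assignment. -/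
namespace Stmt4

/-- A monotone cubic formula with exactly three distinct variables per clause. -/
structure CubicFormula (V C : Type) where
  var : C → Fin 3 → V
  inj : ∀ c, Function.Injective (var c)

variable {V C : Type} [Fintype V] [Fintype C] [DecidableEq V]

/-- α is a 1-in-3 satisfying assignment: exactly one variable per clause is true. -/
def OneInThree (F : CubicFormula V C) (α : V → Bool) : Prop :=
  ∀ c : C, (Finset.univ.filter (fun j : Fin 3 => α (F.var c j) = true)).card = 1

/-- Payoff of clause player `c` for pure strategy `j`, where `p v` is the probability
that variable player `v` plays True: `p_j - Σ_{j'≠j} p_{j'}`. -/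
def clausePure (F : CubicFormula V C) (p : V → ℝ) (c : C) (j : Fin 3) : ℝ :=
  p (F.var c j) - ∑ j' ∈ Finset.univ.erase j, p (F.var c j')

/-- Expected payoff of clause player `c`, where `q c` is its mixed strategy. -/
def clauseExp (F : CubicFormula V C) (p : V → ℝ) (q : C → Fin 3 → ℝ) (c : C) : ℝ :=
  ∑ j, q c j * clausePure F p c j

/-- Payoff of variable player `v` for pure strategy `b` (True/False): 0 for True, and
`-Σ` (probability an incident clause plays `v`'s column) for False. -/
def varPure (F : CubicFormula V C) (q : C → Fin 3 → ℝ) (v : V) (b : Bool) : ℝ :=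
  if b then 0 else -∑ c, ∑ j, (if F.var c j = v then q c j else 0)

/-- Expected payoff of variable player `v`, who plays True with probability `p v`. -/
def varExp (F : CubicFormula V C) (p : V → ℝ) (q : C → Fin 3 → ℝ) (v : V) : ℝ :=
  p v * varPure F q v true + (1 - p v) * varPure F q v false

/-- Social welfare: sum of all players' expected payoffs. -/
def welfare (F : CubicFormula V C) (p : V → ℝ) (q : C → Fin 3 → ℝ) : ℝ :=
  ∑ c, clauseExp F p q c + ∑ v, varExp F p q v

/-- A valid mixed strategy profile. -/
def IsProfile (p : V → ℝ) (q : C → Fin 3 → ℝ) : Prop :=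
  (∀ v, p v ∈ Set.Icc (0:ℝ) 1) ∧ (∀ c j, 0 ≤ q c j) ∧ (∀ c, ∑ j, q c j = 1)

/-- An exact Nash equilibrium: no player can improve by a unilateral (pure) deviation. -/
def IsNE (F : CubicFormula V C) (p : V → ℝ) (q : C → Fin 3 → ℝ) : Prop :=
  IsProfile p q ∧ (∀ c j, clauseExp F p q c ≥ clausePure F p c j) ∧
    (∀ v b, varExp F p q v ≥ varPure F q v b)

/-! Each variable player's payoff is spread over the clauses that may pick it, which turns the
welfare into `Σ_c Σ_j q_{c,j} (clausePure c j + p_j - 1)`. As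
`clausePure c j + p_j = 2 p_j - Σ_{j' ≠ j} p_{j'} ≤ 2`, the welfare is at most `m`, and equality
forces every clause to put weight on a column whose variable plays True surely while the other
two play False surely; rounding `p` then gives a 1-in-3 assignment. -/

lemma exists_eq_of_sum_mul_eq {ι : Type*} [Fintype ι] {w f : ι → ℝ} {M : ℝ}
    (hw0 : ∀ i, 0 ≤ w i) (hw1 : ∑ i, w i = 1) (hf : ∀ i, f i ≤ M)
    (h : ∑ i, w i * f i = M) : ∃ i, f i = M := by
  obtain ⟨i, -, hi⟩ := Finset.exists_ne_zero_of_sum_ne_zero (hw1 ▸ one_ne_zero)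
  have hsum : ∑ i, w i * f i = ∑ i, w i * M := by rw [h, ← Finset.sum_mul, hw1, one_mul]
  refine ⟨i, mul_left_cancel₀ hi ?_⟩
  exact (Finset.sum_eq_sum_iff_of_le fun i _ => mul_le_mul_of_nonneg_left (hf i) (hw0 i)).mp
    hsum i (Finset.mem_univ i)

lemma sum_mul_le_of_le {ι : Type*} [Fintype ι] {w f : ι → ℝ} {M : ℝ}
    (hw0 : ∀ i, 0 ≤ w i) (hw1 : ∑ i, w i = 1) (hf : ∀ i, f i ≤ M) :
    ∑ i, w i * f i ≤ M :=
  calc ∑ i, w i * f i ≤ ∑ i, w i * M :=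
        Finset.sum_le_sum fun i _ => mul_le_mul_of_nonneg_left (hf i) (hw0 i)
    _ = M := by rw [← Finset.sum_mul, hw1, one_mul]

omit [Fintype V] in
lemma varExp_eq (F : CubicFormula V C) (p : V → ℝ) (q : C → Fin 3 → ℝ) (v : V) :
    varExp F p q v = ∑ c, ∑ j, if F.var c j = v then q c j * (p v - 1) else 0 := by
  simp only [varExp, varPure, if_true, Bool.false_eq_true, if_false, ← ite_zero_mul,
    ← Finset.sum_mul]
  ring

lemma sum_varExp (F : CubicFormula V C) (p : V → ℝ) (q : C → Fin 3 → ℝ) :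
    ∑ v, varExp F p q v = ∑ c, ∑ j, q c j * (p (F.var c j) - 1) := by
  simp only [varExp_eq]
  rw [Finset.sum_comm]
  refine Finset.sum_congr rfl fun c _ => ?_
  rw [Finset.sum_comm]
  simp

lemma welfare_eq (F : CubicFormula V C) (p : V → ℝ) {q : C → Fin 3 → ℝ}
    (hq1 : ∀ c, ∑ j, q c j = 1) :
    welfare F p q =
      ∑ c, ∑ j, q c j * (clausePure F p c j + p (F.var c j)) - Fintype.card C := by
  have hc : ∀ c, clauseExp F p q c + ∑ j, q c j * (p (F.var c j) - 1) =
      ∑ j, q c j * (clausePure F p c j + p (F.var c j)) - 1 := by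
    intro c
    have hsub : ∑ j, q c j * (clausePure F p c j + p (F.var c j)) - 1 =
        ∑ j, (q c j * (clausePure F p c j + p (F.var c j)) - q c j) := by
      rw [Finset.sum_sub_distrib, hq1 c]
    rw [hsub, clauseExp, ← Finset.sum_add_distrib]
    exact Finset.sum_congr rfl fun j _ => by ring
  rw [welfare, sum_varExp, ← Finset.sum_add_distrib, Finset.sum_congr rfl fun c _ => hc c,
    Finset.sum_sub_distrib]
  simp

section

variable {F : CubicFormula V C} {p : V → ℝ}

omit [Fintype V] [Fintype C] [DecidableEq V] in
lemma clausePure_add_le_two (hp : ∀ v, p v ∈ Set.Icc (0 : ℝ) 1) (c : C) (j : Fin 3) :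
    clausePure F p c j + p (F.var c j) ≤ 2 := by
  have h0 : 0 ≤ ∑ j' ∈ Finset.univ.erase j, p (F.var c j') :=
    Finset.sum_nonneg fun j' _ => (hp _).1
  have h1 := (hp (F.var c j)).2
  rw [clausePure]
  linarith

omit [Fintype V] [Fintype C] [DecidableEq V] in
lemma eq_one_and_eq_zero_of_clausePure_add_eq_two (hp : ∀ v, p v ∈ Set.Icc (0 : ℝ) 1)
    {c : C} {j : Fin 3} (h : clausePure F p c j + p (F.var c j) = 2) :
    p (F.var c j) = 1 ∧ ∀ j' ≠ j, p (F.var c j') = 0 := by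
  have h0 : 0 ≤ ∑ j' ∈ Finset.univ.erase j, p (F.var c j') :=
    Finset.sum_nonneg fun j' _ => (hp _).1
  have h1 := (hp (F.var c j)).2
  rw [clausePure] at h
  have hrest : ∑ j' ∈ Finset.univ.erase j, p (F.var c j') = 0 := by linarith
  refine ⟨by linarith, fun j' hj' => ?_⟩
  exact (Finset.sum_eq_zero_iff_of_nonneg fun j' _ => (hp _).1).mp hrest j'
    (Finset.mem_erase.mpr ⟨hj', Finset.mem_univ j'⟩)

omit [Fintype V] [Fintype C] [DecidableEq V] in
lemma oneInThree_of_exists_unique_one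
    (h : ∀ c, ∃ j, p (F.var c j) = 1 ∧ ∀ j' ≠ j, p (F.var c j') = 0) :
    OneInThree F fun v => decide (p v = 1) := by
  intro c
  obtain ⟨j, hj1, hj0⟩ := h c
  rw [Finset.card_eq_one]
  refine ⟨j, Finset.ext fun j' => ?_⟩
  simp only [Finset.mem_filter, Finset.mem_univ, true_and, Finset.mem_singleton,
    decide_eq_true_eq]
  refine ⟨fun h1 => ?_, fun hj' => hj' ▸ hj1⟩
  by_contra hne
  rw [hj0 j' hne] at h1
  exact zero_ne_one h1

end

/-- If the game built from φ admits a strategy profile with social welfare equal to the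
number of clauses, then φ has a 1-in-3 satisfying assignment. -/
theorem stmt_4 (F : CubicFormula V C) (p : V → ℝ) (q : C → Fin 3 → ℝ)
    (hprof : IsProfile p q) (hw : welfare F p q = Fintype.card C) :
    ∃ α : V → Bool, OneInThree F α := by
  obtain ⟨hp, hq0, hq1⟩ := hprof
  set gain : C → ℝ := fun c => ∑ j, q c j * (clausePure F p c j + p (F.var c j))
  have hgain_le : ∀ c, gain c ≤ 2 := fun c =>
    sum_mul_le_of_le (hq0 c) (hq1 c) (clausePure_add_le_two hp c)
  have hgain_sum : ∑ c, gain c = ∑ _c : C, 2 := by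
    rw [Finset.sum_const, Finset.card_univ, nsmul_eq_mul]
    linarith [welfare_eq F p hq1]
  have hgain : ∀ c, gain c = 2 := fun c =>
    (Finset.sum_eq_sum_iff_of_le fun c _ => hgain_le c).mp hgain_sum c (Finset.mem_univ c)
  refine ⟨fun v => decide (p v = 1), oneInThree_of_exists_unique_one fun c => ?_⟩
  obtain ⟨j, hj⟩ :=
    exists_eq_of_sum_mul_eq (hq0 c) (hq1 c) (clausePure_add_le_two hp c) (hgain c)
  exact ⟨j, eq_one_and_eq_zero_of_clausePure_add_eq_two hp hj⟩

end Stmt4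
end

section
/- In the modified game G' built from a monotone cubic 1-in-3 SAT formula φ with parameter ε ∈ (0,1), if φ has a 1-in-3 satisfying assignment, then the pure profile in which each variable player plays its truth value and each clause player plays the strategy of the unique true variable in its clause is an ε-well-supported Nash equilibrium in which no player plays Out. -/
namespace Stmt6

/-- A monotone cubic formula with exactly three distinct variables per clause. -/
structure CubicFormula (V C : Type) where
  var : C → Fin 3 → V
  inj : ∀ c, Function.Injective (var c)

variable {V C : Type} [Fintype V] [Fintype C] [DecidableEq V] [DecidableEq C]

/-- α is a 1-in-3 satisfying assignment: exactly one variable per clause is true. -/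
def OneInThree (F : CubicFormula V C) (α : V → Bool) : Prop :=
  ∀ c : C, (Finset.univ.filter (fun j : Fin 3 => α (F.var c j) = true)).card = 1

/-- Each variable occurs in exactly three clause positions (the formula is cubic). -/
def Cubic (F : CubicFormula V C) : Prop :=
  ∀ v : V, (Finset.univ.filter (fun cj : C × Fin 3 => F.var cj.1 cj.2 = v)).card = 3

/-- The bipartite interaction graph between variable players and clause players. -/
def interactionGraph (F : CubicFormula V C) : SimpleGraph (V ⊕ C) :=
  SimpleGraph.fromRel (fun a b =>
    match a, b with
    | Sum.inl v, Sum.inr c => ∃ j, F.var c j = v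
    | _, _ => False)

/-- Payoff to clause player `c_j` on the edge with its `j`-th variable, when the clause
plays `s` (`none` = Out) and the variable plays `b` (`none` = Out). -/
noncomputable def edgeClausePay (cc κ : ℝ) (j : Fin 3) (s : Option (Fin 3)) (b : Option Bool) : ℝ :=
  match s, b with
  | none, _ => 1 / 3
  | some t, some true => if t = j then κ else 0
  | some _, some false => cc * κ
  | some _, none => 0

/-- Payoff to the variable player on the edge where it is the `j`-th variable of a
clause playing `s`, when the variable plays `b` (`none` = Out). -/
noncomputable def edgeVarPay (ε : ℝ) (j : Fin 3) (s : Option (Fin 3)) (b : Option Bool) : ℝ :=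
  match b, s with
  | none, _ => 1 / 3
  | some true, s => if s = some j then 1 / 3 - ε / 3 else 0
  | some false, some t => if t = j then 0 else 1 / 3 - ε / 3
  | some false, none => 0

/-- Payoff of clause player `c` for pure strategy `s`, against the variable players'
mixed strategies `p`. -/
noncomputable def clausePure (F : CubicFormula V C) (cc κ : ℝ) (p : V → Option Bool → ℝ) (c : C)
    (s : Option (Fin 3)) : ℝ :=
  ∑ j : Fin 3, ∑ b : Option Bool, p (F.var c j) b * edgeClausePay cc κ j s b

/-- Payoff of variable player `v` for pure strategy `b`, against the clause players'
mixed strategies `q`. -/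
noncomputable def varPure (F : CubicFormula V C) (ε : ℝ) (q : C → Option (Fin 3) → ℝ) (v : V)
    (b : Option Bool) : ℝ :=
  ∑ c : C, ∑ j : Fin 3, ∑ s : Option (Fin 3),
    (if F.var c j = v then q c s * edgeVarPay ε j s b else 0)

/-- A valid mixed strategy profile of the game G'. -/
def IsProfile (p : V → Option Bool → ℝ) (q : C → Option (Fin 3) → ℝ) : Prop :=
  (∀ v b, 0 ≤ p v b) ∧ (∀ v, ∑ b, p v b = 1) ∧
  (∀ c s, 0 ≤ q c s) ∧ (∀ c, ∑ s, q c s = 1)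

/-- An ε-well-supported Nash equilibrium of G': every pure strategy played with
positive probability is an ε-best response. -/
def IsWSNE (F : CubicFormula V C) (ε cc κ : ℝ) (p : V → Option Bool → ℝ)
    (q : C → Option (Fin 3) → ℝ) : Prop :=
  IsProfile p q ∧
  (∀ v b, 0 < p v b → ∀ b', varPure F ε q v b ≥ varPure F ε q v b' - ε) ∧
  (∀ c s, 0 < q c s → ∀ s', clausePure F cc κ p c s ≥ clausePure F cc κ p c s' - ε)

end Stmt6

/-! Against the prescribed pure profile every player earns exactly `1` from `Out` (three edges
worth `1/3`; for a variable this is where cubicity enters), and no strategy earns more. The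
prescribed strategies earn exactly `1 - ε`: by 1-in-3 satisfaction a clause gets `κ` from its
unique true variable and `c κ` from each of the two false ones, and `κ (1 + 2c) = 1 - ε`; a
variable is played by the clauses in which it is true and avoided by those in which it is
false, which pays `(1 - ε)/3` on each of its three edges. -/

namespace Stmt6

section Payoffs

variable {V C : Type} (F : CubicFormula V C)

theorem sum_pure_mul {β : Type} [Fintype β] [DecidableEq β] (a : β) (g : β → ℝ) :
    ∑ b, (if b = a then (1 : ℝ) else 0) * g b = g a := by
  simp [ite_mul]

theorem sum_fin_three_ite (k : Fin 3) (g : Fin 3 → ℝ) (d : ℝ) :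
    ∑ j, (if j = k then g j else d) = g k + 2 * d := by
  fin_cases k <;> simp [Fin.sum_univ_three] <;> ring

theorem OneInThree.eq_decide {α : V → Bool} (hα : OneInThree F α) {σ : C → Fin 3}
    (hσ : ∀ c, α (F.var c (σ c)) = true) (c : C) (j : Fin 3) :
    α (F.var c j) = decide (j = σ c) := by
  obtain ⟨k, hk⟩ := Finset.card_eq_one.mp (hα c)
  have mem_iff (i : Fin 3) : α (F.var c i) = true ↔ i = k := by
    simpa using Finset.ext_iff.mp hk i
  rw [Bool.eq_iff_iff, mem_iff, decide_eq_true_iff, (mem_iff _).mp (hσ c)]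

section ClauseSide

variable (cc κ : ℝ) {α : V → Bool} {p : V → Option Bool → ℝ}
  (hp : ∀ v b, p v b = if b = some (α v) then 1 else 0)
include hp

theorem clausePure_of_pure (c : C) (s : Option (Fin 3)) :
    clausePure F cc κ p c s = ∑ j, edgeClausePay cc κ j s (some (α (F.var c j))) := by
  simp only [clausePure, hp, sum_pure_mul]

theorem clausePure_none_of_pure (c : C) : clausePure F cc κ p c none = 1 := by
  rw [clausePure_of_pure F cc κ hp]
  simp only [edgeClausePay, Finset.sum_const, Finset.card_univ, Fintype.card_fin]
  norm_num

theorem clausePure_some_of_oneInThree (hα : OneInThree F α) {σ : C → Fin 3}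
    (hσ : ∀ c, α (F.var c (σ c)) = true) (c : C) (t : Fin 3) :
    clausePure F cc κ p c (some t) = (if t = σ c then κ else 0) + 2 * (cc * κ) := by
  have edge (j : Fin 3) : edgeClausePay cc κ j (some t) (some (decide (j = σ c))) =
      if j = σ c then (if t = j then κ else 0) else cc * κ := by
    by_cases h : j = σ c <;> simp [edgeClausePay, h]
  simp only [clausePure_of_pure F cc κ hp, hα.eq_decide F hσ c, edge, sum_fin_three_ite]

theorem clausePure_le_one_of_oneInThree (hα : OneInThree F α) {σ : C → Fin 3}
    (hσ : ∀ c, α (F.var c (σ c)) = true) (hκ : 0 ≤ κ) (hκsum : κ + 2 * (cc * κ) ≤ 1)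
    (c : C) (s : Option (Fin 3)) : clausePure F cc κ p c s ≤ 1 := by
  rcases s with _ | t
  · exact (clausePure_none_of_pure F cc κ hp c).le
  · rw [clausePure_some_of_oneInThree F cc κ hp hα hσ]
    split_ifs <;> linarith

end ClauseSide

theorem edgeVarPay_some_some (ε : ℝ) {j s : Fin 3} {a : Bool} (hs : s = j ↔ a = true)
    (b : Bool) : edgeVarPay ε j (some s) (some b) = if b = a then (1 - ε) / 3 else 0 := by
  cases a <;> cases b <;> simp_all [edgeVarPay] <;> ring

section VariableSide

variable [Fintype C] [DecidableEq V] (ε : ℝ) {σ : C → Fin 3}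
  {q : C → Option (Fin 3) → ℝ} (hq : ∀ c s, q c s = if s = some (σ c) then 1 else 0)
include hq

theorem varPure_of_pure (v : V) (b : Option Bool) :
    varPure F ε q v b = ∑ cj ∈ Finset.univ.filter (fun cj : C × Fin 3 => F.var cj.1 cj.2 = v),
      edgeVarPay ε cj.2 (some (σ cj.1)) b := by
  rw [varPure, Finset.sum_filter, ← Finset.sum_product']
  refine Finset.sum_congr rfl fun cj _ => ?_
  split_ifs <;> simp [hq, ite_mul]

theorem varPure_none_of_cubic (hcub : Cubic F) (v : V) : varPure F ε q v none = 1 := by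
  simp only [varPure_of_pure F ε hq, edgeVarPay, Finset.sum_const, hcub v]
  norm_num

theorem varPure_some_of_oneInThree (hcub : Cubic F) {α : V → Bool} (hα : OneInThree F α)
    (hσ : ∀ c, α (F.var c (σ c)) = true) (v : V) (b : Bool) :
    varPure F ε q v (some b) = if b = α v then 1 - ε else 0 := by
  have edge : ∀ cj ∈ Finset.univ.filter (fun cj : C × Fin 3 => F.var cj.1 cj.2 = v),
      edgeVarPay ε cj.2 (some (σ cj.1)) (some b) = if b = α v then (1 - ε) / 3 else 0 := by
    intro cj hcj
    refine edgeVarPay_some_some ε ?_ b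
    rw [← (Finset.mem_filter.mp hcj).2, hα.eq_decide F hσ, decide_eq_true_iff, eq_comm]
  rw [varPure_of_pure F ε hq, Finset.sum_congr rfl edge, Finset.sum_const, hcub v]
  split_ifs <;> simp; ring

theorem varPure_le_one_of_oneInThree (hcub : Cubic F) {α : V → Bool} (hα : OneInThree F α)
    (hσ : ∀ c, α (F.var c (σ c)) = true) (hε : 0 ≤ ε) (v : V) (b : Option Bool) :
    varPure F ε q v b ≤ 1 := by
  rcases b with _ | b
  · exact (varPure_none_of_cubic F ε hq hcub v).le
  · rw [varPure_some_of_oneInThree F ε hq hcub hα hσ]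
    split_ifs <;> linarith

end VariableSide

theorem isProfile_of_pure {α : V → Option Bool}
    {σ : C → Option (Fin 3)} {p : V → Option Bool → ℝ} {q : C → Option (Fin 3) → ℝ}
    (hp : ∀ v b, p v b = if b = α v then 1 else 0)
    (hq : ∀ c s, q c s = if s = σ c then 1 else 0) : IsProfile p q := by
  refine ⟨fun v b => ?_, fun v => ?_, fun c s => ?_, fun c => ?_⟩ <;>
    simp [hp, hq, ite_nonneg]

end Payoffs

variable {V C : Type} [Fintype V] [Fintype C] [DecidableEq V] [DecidableEq C]

theorem stmt_6_general (F : CubicFormula V C) (hcub : Cubic F) (ε cc κ : ℝ)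
    (hε0 : 0 < ε) (hε1 : ε < 1) (hcc0 : max (1 - 3 * ε / 2) 0 < cc)
    (hκ : κ = (1 - ε) / (1 + 2 * cc))
    (α : V → Bool) (hα : OneInThree F α)
    (σ : C → Fin 3) (hσ : ∀ c, α (F.var c (σ c)) = true)
    (p : V → Option Bool → ℝ) (q : C → Option (Fin 3) → ℝ)
    (hp : ∀ v b, p v b = if b = some (α v) then 1 else 0)
    (hq : ∀ c s, q c s = if s = some (σ c) then 1 else 0) :
    IsWSNE F ε cc κ p q ∧ (∀ v, p v none = 0) ∧ (∀ c, q c none = 0) := by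
  have hcc : 0 < cc := (le_max_right _ _).trans_lt hcc0
  have hκ0 : 0 ≤ κ := hκ ▸ div_nonneg (by linarith) (by linarith)
  have hκsum : κ + 2 * (cc * κ) = 1 - ε := by rw [hκ]; field_simp
  refine ⟨⟨isProfile_of_pure hp hq, fun v b hb b' => ?_, fun c s hs s' => ?_⟩,
    fun v => by simp [hp], fun c => by simp [hq]⟩
  · obtain rfl : b = some (α v) := by by_contra hne; simp [hp, hne] at hb
    rw [varPure_some_of_oneInThree F ε hq hcub hα hσ, if_pos rfl]
    linarith [varPure_le_one_of_oneInThree F ε hq hcub hα hσ hε0.le v b']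
  · obtain rfl : s = some (σ c) := by by_contra hne; simp [hq, hne] at hs
    rw [clausePure_some_of_oneInThree F cc κ hp hα hσ, if_pos rfl]
    linarith [clausePure_le_one_of_oneInThree F cc κ hp hα hσ hκ0 (by linarith) c s']

/-- If φ has a 1-in-3 satisfying assignment, then the pure profile in which each
variable player plays its truth value and each clause player plays the strategy of the
unique true variable of its clause is an ε-WSNE of G' in which no player plays Out. -/
theorem stmt_6 (F : CubicFormula V C) (hcub : Cubic F) (ε cc κ : ℝ)
    (hε0 : 0 < ε) (hε1 : ε < 1) (hcc0 : max (1 - 3 * ε / 2) 0 < cc) (hcc1 : cc < 1)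
    (hκ : κ = (1 - ε) / (1 + 2 * cc))
    (α : V → Bool) (hα : OneInThree F α)
    (σ : C → Fin 3) (hσ : ∀ c, α (F.var c (σ c)) = true)
    (p : V → Option Bool → ℝ) (q : C → Option (Fin 3) → ℝ)
    (hp : ∀ v b, p v b = if b = some (α v) then 1 else 0)
    (hq : ∀ c s, q c s = if s = some (σ c) then 1 else 0) :
    IsWSNE F ε cc κ p q ∧ (∀ v, p v none = 0) ∧ (∀ c, q c none = 0) :=
  stmt_6_general F hcub ε cc κ hε0 hε1 hcc0 hκ α hα σ hσ p q hp hq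

end Stmt6
end

section
/- Duplicating a pure strategy of a player in a polymatrix game (adding a new pure strategy with payoff rows and columns identical to an existing one) preserves ε-well-supported Nash equilibria: any ε-WSNE of the original game remains an ε-WSNE of the duplicated game, and moreover the profile obtained by splitting the probability of a duplicated strategy evenly between the original and its copy is also an ε-WSNE. -/
/-!
Merging the copy back into `a0` pushes a mixed profile `σ'` of the duplicated game forward to a
profile of the original game. Since the duplicated payoffs factor through the projection, a pure
strategy earns against `σ'` exactly what its projection earns against the pushforward, and every
strategy in the support of `σ'` projects into the support of the pushforward. So `σ'` is an
ε-WSNE as soon as it is nonnegative and its pushforward is one; both profiles of the theorem push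
forward to `σ` itself.
-/

namespace Stmt9

variable {I : Type} [Fintype I] [DecidableEq I]

/-- Payoff of player `i` for pure strategy `a` against the mixed profile `σ`, in a
polymatrix game with edge payoff matrices `pay`. -/
def purePay {Act : I → Type} [∀ i, Fintype (Act i)]
    (pay : ∀ i j, Act i → Act j → ℝ) (σ : ∀ j, Act j → ℝ) (i : I) (a : Act i) : ℝ :=
  ∑ j ∈ Finset.univ.erase i, ∑ b : Act j, σ j b * pay i j a b

/-- A valid mixed strategy profile. -/
def IsProfile {Act : I → Type} [∀ i, Fintype (Act i)] (σ : ∀ j, Act j → ℝ) : Prop :=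
  ∀ i, (∀ a, 0 ≤ σ i a) ∧ ∑ a, σ i a = 1

/-- An ε-well-supported Nash equilibrium: every pure strategy in the support of any
player is an ε-best response. -/
def IsWSNE {Act : I → Type} [∀ i, Fintype (Act i)]
    (pay : ∀ i j, Act i → Act j → ℝ) (ε : ℝ) (σ : ∀ j, Act j → ℝ) : Prop :=
  IsProfile σ ∧
  ∀ i a, 0 < σ i a → ∀ a', purePay pay σ i a ≥ purePay pay σ i a' - ε

/-- The action set of the duplicated game: player `i0` gets one extra pure strategy
(the copy of `a0`); all other players are unchanged. -/
abbrev Act2 (Act : I → Type) (i0 : I) (i : I) : Type :=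
  Act i ⊕ Fin (if i = i0 then 1 else 0)

/-- The projection from duplicated actions to original actions, sending the copy back
to the original strategy `a0`. -/
def proj {Act : I → Type} (i0 : I) (a0 : Act i0) (i : I) : Act2 Act i0 i → Act i
  | Sum.inl a => a
  | Sum.inr x =>
    if h : i = i0 then cast (congrArg Act h.symm) a0
    else Fin.elim0 (Fin.cast (by simp [h]) x)

/-- The duplicated game: payoffs are obtained by projecting the duplicate back to the
original strategy, so the copy has payoff rows and columns identical to `a0`. -/
def pay2 {Act : I → Type} (pay : ∀ i j, Act i → Act j → ℝ) (i0 : I) (a0 : Act i0)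
    (i j : I) (a : Act2 Act i0 i) (b : Act2 Act i0 j) : ℝ :=
  pay i j (proj i0 a0 i a) (proj i0 a0 j b)

end Stmt9

namespace Stmt9

section Pushforward

variable {I : Type} [DecidableEq I] {Act : I → Type} {i0 : I} {a0 : Act i0}

@[simp]
lemma proj_inl {j : I} (b : Act j) : proj i0 a0 j (Sum.inl b) = b := rfl

@[simp]
lemma proj_inr_self (x : Fin (if i0 = i0 then 1 else 0)) : proj i0 a0 i0 (Sum.inr x) = a0 := by
  simp [proj]

variable (i0) in
def extendByZero (σ : ∀ j, Act j → ℝ) (i : I) : Act2 Act i0 i → ℝ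
  | Sum.inl a => σ i a
  | Sum.inr _ => 0

variable (i0 a0) in
noncomputable def splitProfile [∀ i, DecidableEq (Act i)] (σ : ∀ j, Act j → ℝ) (i : I) :
    Act2 Act i0 i → ℝ
  | Sum.inl a =>
    if h : i = i0 then (if cast (congrArg Act h) a = a0 then σ i a / 2 else σ i a) else σ i a
  | Sum.inr _ => σ i0 a0 / 2

lemma extendByZero_nonneg {σ : ∀ j, Act j → ℝ} (hσ : ∀ j a, 0 ≤ σ j a) (j : I)
    (x : Act2 Act i0 j) : 0 ≤ extendByZero i0 σ j x := by
  cases x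
  exacts [hσ j _, le_rfl]

lemma splitProfile_nonneg [∀ i, DecidableEq (Act i)] {σ : ∀ j, Act j → ℝ}
    (hσ : ∀ j a, 0 ≤ σ j a) (j : I) (x : Act2 Act i0 j) : 0 ≤ splitProfile i0 a0 σ j x := by
  cases x with
  | inl a =>
    have ha := hσ j a
    simp only [splitProfile]
    split_ifs <;> linarith
  | inr => exact div_nonneg (hσ i0 a0) zero_le_two

variable [∀ i, Fintype (Act i)] [∀ i, DecidableEq (Act i)]

variable (i0 a0) in
def pushProfile (σ' : ∀ j, Act2 Act i0 j → ℝ) (j : I) (b : Act j) : ℝ :=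
  ∑ x, if proj i0 a0 j x = b then σ' j x else 0

lemma sum_pushProfile (σ' : ∀ j, Act2 Act i0 j → ℝ) (j : I) :
    ∑ b, pushProfile i0 a0 σ' j b = ∑ x, σ' j x := by
  simp only [pushProfile]
  rw [Finset.sum_comm]
  simp

lemma le_pushProfile_proj {σ' : ∀ j, Act2 Act i0 j → ℝ} {j : I} (hσ' : ∀ x, 0 ≤ σ' j x)
    (x : Act2 Act i0 j) : σ' j x ≤ pushProfile i0 a0 σ' j (proj i0 a0 j x) := by
  calc σ' j x = if proj i0 a0 j x = proj i0 a0 j x then σ' j x else 0 := (if_pos rfl).symm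
    _ ≤ pushProfile i0 a0 σ' j (proj i0 a0 j x) :=
      Finset.single_le_sum (f := fun y => if proj i0 a0 j y = proj i0 a0 j x then σ' j y else 0)
        (fun y _ => ite_nonneg (hσ' y) le_rfl) (Finset.mem_univ x)

lemma pushProfile_of_ne (σ' : ∀ j, Act2 Act i0 j → ℝ) {j : I} (hj : j ≠ i0) (b : Act j) :
    pushProfile i0 a0 σ' j b = σ' j (Sum.inl b) := by
  have : IsEmpty (Fin (if j = i0 then 1 else 0)) := by
    rw [if_neg hj]
    infer_instance
  rw [pushProfile, Fintype.sum_sum_type, Fintype.sum_empty (ι := Fin _), add_zero]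
  exact Finset.sum_ite_eq_of_mem' _ b _ (Finset.mem_univ b)

lemma pushProfile_self (σ' : ∀ j, Act2 Act i0 j → ℝ) (b : Act i0) :
    pushProfile i0 a0 σ' i0 b
      = σ' i0 (Sum.inl b) + if a0 = b then ∑ x, σ' i0 (Sum.inr x) else 0 := by
  rw [pushProfile, Fintype.sum_sum_type]
  congr 1
  · exact Finset.sum_ite_eq_of_mem' _ b _ (Finset.mem_univ b)
  · by_cases h : a0 = b <;> simp [h]

lemma purePay_pay2 [Fintype I] (pay : ∀ i j, Act i → Act j → ℝ)
    (σ' : ∀ j, Act2 Act i0 j → ℝ) (i : I) (a : Act2 Act i0 i) :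
    purePay (pay2 pay i0 a0) σ' i a
      = purePay pay (pushProfile i0 a0 σ') i (proj i0 a0 i a) := by
  refine Finset.sum_congr rfl fun j _ => ?_
  simp only [pushProfile, pay2, Finset.sum_mul, ite_mul, zero_mul]
  rw [Finset.sum_comm]
  simp

lemma IsWSNE.of_pushProfile [Fintype I] {pay : ∀ i j, Act i → Act j → ℝ} {ε : ℝ}
    {σ' : ∀ j, Act2 Act i0 j → ℝ} (hσ' : ∀ j x, 0 ≤ σ' j x)
    (h : IsWSNE pay ε (pushProfile i0 a0 σ')) : IsWSNE (pay2 pay i0 a0) ε σ' := by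
  refine ⟨fun i => ⟨hσ' i, ?_⟩, fun i a ha a' => ?_⟩
  · rw [← sum_pushProfile]
    exact (h.1 i).2
  · rw [purePay_pay2, purePay_pay2]
    exact h.2 i _ (ha.trans_le (le_pushProfile_proj (hσ' i) a)) _

lemma pushProfile_extendByZero (σ : ∀ j, Act j → ℝ) :
    pushProfile i0 a0 (extendByZero i0 σ) = σ := by
  funext j b
  by_cases hj : j = i0
  · subst hj
    simp [pushProfile_self, extendByZero]
  · exact pushProfile_of_ne _ hj b

lemma pushProfile_splitProfile (σ : ∀ j, Act j → ℝ) :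
    pushProfile i0 a0 (splitProfile i0 a0 σ) = σ := by
  funext j b
  by_cases hj : j = i0
  · subst hj
    by_cases hb : b = a0
    · subst hb
      simp [pushProfile_self, splitProfile]
    · simp [pushProfile_self, splitProfile, hb, Ne.symm hb]
  · simp [pushProfile_of_ne _ hj, splitProfile, hj]

end Pushforward

variable {I : Type} [Fintype I] [DecidableEq I]

theorem stmt_9_general {Act : I → Type} [∀ i, Fintype (Act i)] [∀ i, DecidableEq (Act i)]
    (pay : ∀ i j, Act i → Act j → ℝ) (i0 : I) (a0 : Act i0)
    (ε : ℝ) (σ : ∀ j, Act j → ℝ) (hσ : IsWSNE pay ε σ) :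
    IsWSNE (pay2 pay i0 a0) ε
      (fun i x => match x with
        | Sum.inl a => σ i a
        | Sum.inr _ => 0) ∧
    IsWSNE (pay2 pay i0 a0) ε
      (fun i x => match x with
        | Sum.inl a =>
          if h : i = i0 then
            (if cast (congrArg Act h) a = a0 then σ i a / 2 else σ i a)
          else σ i a
        | Sum.inr _ => σ i0 a0 / 2) := by
  have hnonneg : ∀ j a, 0 ≤ σ j a := fun j => (hσ.1 j).1
  have hzero : IsWSNE (pay2 pay i0 a0) ε (extendByZero i0 σ) :=
    IsWSNE.of_pushProfile (extendByZero_nonneg hnonneg)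
      (by rwa [pushProfile_extendByZero])
  have hsplit : IsWSNE (pay2 pay i0 a0) ε (splitProfile i0 a0 σ) :=
    IsWSNE.of_pushProfile (splitProfile_nonneg hnonneg)
      (by rwa [pushProfile_splitProfile])
  exact ⟨hzero, hsplit⟩

/-- Duplicating a pure strategy preserves ε-WSNE: the original equilibrium (placing no
probability on the copy) remains an ε-WSNE, and so does the profile that splits the
probability of the duplicated strategy evenly between the original and its copy. -/
theorem stmt_9 {Act : I → Type} [∀ i, Fintype (Act i)] [∀ i, DecidableEq (Act i)]
    (pay : ∀ i j, Act i → Act j → ℝ) (i0 : I) (a0 : Act i0)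
    (ε : ℝ) (hε : 0 ≤ ε) (σ : ∀ j, Act j → ℝ) (hσ : IsWSNE pay ε σ) :
    IsWSNE (pay2 pay i0 a0) ε
      (fun i x => match x with
        | Sum.inl a => σ i a
        | Sum.inr _ => 0) ∧
    IsWSNE (pay2 pay i0 a0) ε
      (fun i x => match x with
        | Sum.inl a =>
          if h : i = i0 then
            (if cast (congrArg Act h) a = a0 then σ i a / 2 else σ i a)
          else σ i a
        | Sum.inr _ => σ i0 a0 / 2) :=
  stmt_9_general pay i0 a0 ε σ hσ

end Stmt9
end
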